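/- arXiv:1610.02137 — 4 statements merged into one kernel-verified Lean document; each statement's English description precedes it below -/
import Mathlib

section
/- There exist constants c > 0 and λ₀ > 0 depending only on v such that for all λ ≥ λ₀, all t ∈ 𝓘 = [−1,2], and every n ≥ 0, the function θ_n satisfies (dθ_n/dx)(x) > c·2ⁿ at every point x ∈ ℝ/ℤ where θ_n is differentiable. -/
open Real MeasureTheory Filter in
noncomputable def arccot (y : ℝ) : ℝ := Real.pi / 2 - Real.arctan y

/-- Euclidean (= ℓ²) operator norm of a 2×2 real matrix. -/
noncomputable def matNorm (M : Matrix (Fin 2) (Fin 2) ℝ) : ℝ :=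
  ‖(Matrix.toEuclideanLin.trans LinearMap.toContinuousLinearMap) M‖

/-- Cocycle iterates over the doubling map `x ↦ 2x`. -/
def cocycle (A : ℝ → Matrix (Fin 2) (Fin 2) ℝ) : ℕ → ℝ → Matrix (Fin 2) (Fin 2) ℝ
  | 0, _ => 1
  | n + 1, x => cocycle A n (2 * x) * A x

/-- Lyapunov exponent (as the infimum of the subadditive sequence). -/
noncomputable def lyap (A : ℝ → Matrix (Fin 2) (Fin 2) ℝ) : ℝ :=
  ⨅ n : ℕ, (1 / (n + 1 : ℝ)) * ∫ x in (0:ℝ)..1, Real.log (matNorm (cocycle A (n + 1) x))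

/-- The angles θₙ. -/
noncomputable def thetaN (v : ℝ → ℝ) (t lam : ℝ) : ℕ → ℝ → ℝ
  | 0, x => arccot (t - v x)
  | n + 1, x =>
      arccot (lam ^ 2 * ((t - v (2 ^ (n + 1) * x)) ^ 2 + 1) *
          Real.cot (thetaN v t lam n x))
        + arccot (t - v (2 ^ (n + 1) * x))

/-- The polar-form cocycle map. -/
noncomputable def polarA (v : ℝ → ℝ) (t lam : ℝ) (x : ℝ) : Matrix (Fin 2) (Fin 2) ℝ :=
  !![lam * Real.sqrt ((t - v (2 * x)) ^ 2 + 1), 0;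
     0, lam⁻¹ / Real.sqrt ((t - v (2 * x)) ^ 2 + 1)] *
  !![Real.cos (arccot (t - v x)), -Real.sin (arccot (t - v x));
     Real.sin (arccot (t - v x)), Real.cos (arccot (t - v x))]

/-- Distance to the nearest point of πℤ. -/
noncomputable def distRP1 (s : ℝ) : ℝ := |s - round (s / Real.pi) * Real.pi|

/-!
Differentiating the recursion, `θₙ₊₁'` is the sum of `v'(2ⁿ⁺¹x) 2ⁿ⁺¹ / g ≥ κ 2ⁿ⁺¹`, where
`κ = c₁ / (1 + (2 + C₁)²)`, and of the derivative of `arccot (λ² g cot θₙ)`. The latter has a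
positive part proportional to `θₙ'` and a cross term of size `≲ λ² |cot θₙ| 2ⁿ⁺¹`; once
`θₙ' ≥ (κ/2) 2ⁿ`, AM-GM against the denominator `1 + (λ² g cot θₙ)²` bounds it below by
`-(κ/2) 2ⁿ⁺¹` for `λ` large. So `θₙ' ≥ (κ/2) 2ⁿ` by induction wherever the recursion is
differentiable, i.e. off the dyadic points and off the points where some earlier `θⱼ` hits the
jump of `cot` at `π`. Each `θⱼ` is increasing there, so these points do not accumulate from the
right, and the mean value theorem carries the bound over to the right difference quotients at
any point where `θₙ` is differentiable.
-/

open Real Filter Topology Set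

lemma arccot_pos (y : ℝ) : 0 < arccot y := by
  unfold arccot; linarith [arctan_lt_pi_div_two y]

lemma arccot_lt_pi (y : ℝ) : arccot y < π := by
  unfold arccot; linarith [neg_pi_div_two_lt_arctan y]

lemma hasDerivAt_arccot (y : ℝ) : HasDerivAt arccot (-(1 + y ^ 2)⁻¹) y :=
  (hasDerivAt_arctan' y).const_sub (π / 2)

lemma Real.hasDerivAt_cot_of_sin_ne_zero {θ : ℝ} (h : sin θ ≠ 0) :
    HasDerivAt cot (-(1 + cot θ ^ 2)) θ := by
  rw [show cot = fun y => cos y / sin y from funext cot_eq_cos_div_sin]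
  refine ((hasDerivAt_cos θ).div (hasDerivAt_sin θ) h).congr_deriv ?_
  field_simp
  ring

lemma Real.sin_ne_zero_of_mem_Ioo_of_ne_pi {θ : ℝ} (hθ : θ ∈ Ioo 0 (2 * π)) (hπ : θ ≠ π) :
    sin θ ≠ 0 := by
  rcases hπ.lt_or_gt with h | h
  · exact (sin_pos_of_pos_of_lt_pi hθ.1 h).ne'
  · have := sin_pos_of_pos_of_lt_pi (x := θ - π) (by linarith) (by linarith [hθ.2])
    rw [sin_sub_pi] at this
    linarith

lemma hasDerivAt_arccot_mul_cot_add_arccot {A θ : ℝ → ℝ} {A' θ' x : ℝ} (L : ℝ)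
    (hA : HasDerivAt A A' x) (hθ : HasDerivAt θ θ' x) (hsin : sin (θ x) ≠ 0) :
    HasDerivAt (fun y => arccot (L * (A y ^ 2 + 1) * cot (θ y)) + arccot (A y))
      (L * (-(2 * A x * A') * cot (θ x) + (A x ^ 2 + 1) * (1 + cot (θ x) ^ 2) * θ') /
          (1 + (L * (A x ^ 2 + 1) * cot (θ x)) ^ 2) - A' / (A x ^ 2 + 1)) x := by
  have hP := (((hA.fun_pow 2).add_const 1).const_mul L).fun_mul
    ((hasDerivAt_cot_of_sin_ne_zero hsin).comp x hθ)
  simp only [Function.comp_def] at hP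
  refine (((hasDerivAt_arccot _).comp x hP).add ((hasDerivAt_arccot _).comp x hA)).congr_deriv ?_
  field_simp
  ring

lemma neg_mul_le_div_of_sq_le {L g s d e k ε δ M : ℝ} (hL : 0 ≤ L) (hg : 1 ≤ g) (hε : 0 < ε)
    (hk : 0 ≤ k) (hδ : 0 ≤ δ) (hd : δ * k ≤ d) (he : |e| ≤ 2 * M * k)
    (hM : M ^ 2 ≤ ε * δ * L) :
    -(ε * k) ≤ L * (e * s + g * (1 + s ^ 2) * d) / (1 + (L * g * s) ^ 2) := by
  rw [le_div_iff₀ (by positivity)]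
  have hcross : -(2 * M * k * |s|) ≤ e * s := by
    have := mul_le_mul_of_nonneg_right he (abs_nonneg s)
    rw [← abs_mul] at this
    linarith [neg_abs_le (e * s)]
  have hdiag : (1 + s ^ 2) * (δ * k) ≤ g * (1 + s ^ 2) * d := by
    have : (1 + s ^ 2) * (δ * k) ≤ (1 + s ^ 2) * d := by gcongr
    nlinarith [mul_le_mul_of_nonneg_right hg (by positivity : 0 ≤ (1 + s ^ 2) * (δ * k))]
  have hden : (L * s) ^ 2 ≤ (L * g * s) ^ 2 := by
    rw [mul_right_comm, mul_pow _ g]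
    nlinarith [mul_le_mul_of_nonneg_left (one_le_pow₀ hg : 1 ≤ g ^ 2) (sq_nonneg (L * s))]
  -- AM-GM: `2 M L |s| ≤ ε (L s)² + M² / ε ≤ ε (L s)² + δ L`
  have hamgm : 2 * M * (L * |s|) ≤ ε * (L * s) ^ 2 + δ * L := by
    rw [show (L * s) ^ 2 = (L * |s|) ^ 2 by rw [mul_pow, mul_pow, sq_abs]]
    refine le_of_mul_le_mul_left ?_ hε
    nlinarith [sq_nonneg (ε * (L * |s|) - M)]
  nlinarith [mul_le_mul_of_nonneg_left hden (by positivity : 0 ≤ ε * k),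
    mul_le_mul_of_nonneg_left hamgm hk, mul_le_mul_of_nonneg_left hcross hL,
    mul_le_mul_of_nonneg_left hdiag hL, mul_nonneg (mul_nonneg hL hδ) (mul_nonneg hk (sq_nonneg s))]

lemma eventually_nhdsGT_mul_ne_intCast {a : ℝ} (ha : 0 < a) (x : ℝ) :
    ∀ᶠ y in 𝓝[>] x, ∀ m : ℤ, a * y ≠ m := by
  have hx : x < (⌊a * x⌋ + 1) / a := by
    rw [lt_div_iff₀ ha, mul_comm]; exact Int.lt_floor_add_one _
  filter_upwards [Ioo_mem_nhdsGT hx] with y hy m hm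
  have hlo : (⌊a * x⌋ : ℝ) < m := by
    rw [← hm]; nlinarith [Int.floor_le (a * x), hy.1]
  have hhi : (m : ℝ) < ⌊a * x⌋ + 1 := by
    rw [← hm]; linarith [(lt_div_iff₀ ha).mp hy.2]
  norm_cast at hlo hhi
  omega

lemma eventually_nhdsGT_ne_of_hasDerivAt_pos {f : ℝ → ℝ} {x : ℝ}
    (h : ∀ᶠ y in 𝓝[>] x, ∃ d, HasDerivAt f d y ∧ 0 < d) (c : ℝ) :
    ∀ᶠ y in 𝓝[>] x, f y ≠ c := by
  obtain ⟨b, hxb, hsub⟩ := mem_nhdsGT_iff_exists_Ioo_subset.mp h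
  have hmono : StrictMonoOn f (Ioo x b) := by
    refine strictMonoOn_of_deriv_pos (convex_Ioo x b) (fun y hy => ?_) fun y hy => ?_
    · obtain ⟨d, hd, -⟩ := hsub hy
      exact hd.continuousAt.continuousWithinAt
    · obtain ⟨d, hd, hpos⟩ := hsub (interior_subset hy)
      rwa [hd.deriv]
  by_cases hc : ∃ y₀ ∈ Ioo x b, f y₀ = c
  · obtain ⟨y₀, hy₀, rfl⟩ := hc
    filter_upwards [Ioo_mem_nhdsGT hy₀.1] with y hy
    exact (hmono ⟨hy.1, hy.2.trans hy₀.2⟩ hy₀ hy.2).ne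
  · push Not at hc
    filter_upwards [Ioo_mem_nhdsGT hxb] with y hy using hc y hy

lemma le_deriv_of_eventually_nhdsGT {f : ℝ → ℝ} {x m : ℝ} (hf : DifferentiableAt ℝ f x)
    (h : ∀ᶠ y in 𝓝[>] x, ∃ d, HasDerivAt f d y ∧ m ≤ d) : m ≤ deriv f x := by
  obtain ⟨b, hxb, hsub⟩ := mem_nhdsGT_iff_exists_Ioo_subset.mp h
  have hgrowth : ∀ y ∈ Ioo x b, m * (y - x) ≤ f y - f x := by
    refine fun y hy => (convex_Ico x b).mul_sub_le_image_sub_of_le_deriv ?_ ?_ ?_ x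
      (left_mem_Ico.mpr hxb) y (Ioo_subset_Ico_self hy) hy.1.le
    · intro z hz
      rcases hz.1.eq_or_lt with rfl | hxz
      · exact hf.continuousAt.continuousWithinAt
      · obtain ⟨d, hd, -⟩ := hsub ⟨hxz, hz.2⟩
        exact hd.continuousAt.continuousWithinAt
    · rw [interior_Ico]
      intro z hz
      obtain ⟨d, hd, -⟩ := hsub hz
      exact hd.differentiableAt.differentiableWithinAt
    · rw [interior_Ico]
      intro z hz
      obtain ⟨d, hd, hmd⟩ := hsub hz
      rwa [hd.deriv]
  refine ge_of_tendsto (hf.hasDerivAt.tendsto_slope.mono_left (nhdsGT_le_nhdsNE x)) ?_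
  filter_upwards [Ioo_mem_nhdsGT hxb] with y hy
  rw [slope_def_field, le_div_iff₀ (sub_pos.mpr hy.1)]
  exact hgrowth y hy

lemma thetaN_mem_Ioo (v : ℝ → ℝ) (t lam : ℝ) (n : ℕ) (x : ℝ) :
    thetaN v t lam n x ∈ Ioo 0 (2 * π) := by
  cases n with
  | zero => exact ⟨arccot_pos (t - v x), (arccot_lt_pi (t - v x)).trans (by linarith [pi_pos])⟩
  | succ n => exact ⟨add_pos (arccot_pos _) (arccot_pos _),
      (add_lt_add (arccot_lt_pi _) (arccot_lt_pi _)).trans_eq (two_mul π).symm⟩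

structure AdmissiblePotential (v v' : ℝ → ℝ) (c₁ C₁ : ℝ) : Prop where
  periodic : Function.Periodic v 1
  hasDerivAt : ∀ x ∈ Ioo (0 : ℝ) 1, HasDerivAt v (v' x) x
  le_deriv : ∀ x ∈ Ioo (0 : ℝ) 1, c₁ ≤ v' x
  abs_add_abs_le : ∀ x ∈ Ioo (0 : ℝ) 1, |v x| + |v' x| ≤ C₁

namespace AdmissiblePotential

variable {v v' : ℝ → ℝ} {c₁ C₁ : ℝ}

lemma lower_le_upper (hv : AdmissiblePotential v v' c₁ C₁) : c₁ ≤ C₁ := by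
  have h : (1 / 2 : ℝ) ∈ Ioo 0 1 := by norm_num
  linarith [hv.le_deriv _ h, hv.abs_add_abs_le _ h, abs_nonneg (v (1 / 2)),
    le_abs_self (v' (1 / 2))]

lemma exists_hasDerivAt (hv : AdmissiblePotential v v' c₁ C₁) {t u : ℝ}
    (ht : t ∈ Icc (-1 : ℝ) 2) (hu : ∀ m : ℤ, u ≠ m) :
    ∃ V, HasDerivAt v V u ∧ c₁ ≤ V ∧ |V| ≤ C₁ ∧ |t - v u| ≤ 2 + C₁ := by
  have hw : Int.fract u ∈ Ioo 0 1 := ⟨Int.fract_pos.mpr (hu _), Int.fract_lt_one u⟩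
  have hshift : (fun y => v (y - ⌊u⌋)) = v :=
    funext fun y => by simpa using hv.periodic.sub_int_mul_eq (x := y) ⌊u⌋
  have hbd := hv.abs_add_abs_le _ hw
  have hvu : v u = v (Int.fract u) := by rw [← Int.self_sub_floor, ← congrFun hshift u]
  rw [hvu]
  refine ⟨v' (Int.fract u), ?_, hv.le_deriv _ hw, by linarith [abs_nonneg (v (Int.fract u))], ?_⟩
  · simpa [hshift] using (hv.hasDerivAt _ hw).comp_sub_const u ⌊u⌋
  · have : |t| ≤ 2 := abs_le.mpr ⟨by linarith [ht.1], ht.2⟩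
    linarith [abs_sub t (v (Int.fract u)), abs_nonneg (v' (Int.fract u))]

end AdmissiblePotential

section ThetaDerivative

variable {v : ℝ → ℝ} {t lam c₁ C₁ κ V : ℝ}

lemma mul_sq_add_one_le (hκ : 0 ≤ κ) (hκc : κ * (1 + (2 + C₁) ^ 2) ≤ c₁) (hV : c₁ ≤ V)
    {a : ℝ} (ha : |a| ≤ 2 + C₁) : κ * (a ^ 2 + 1) ≤ V := by
  have : a ^ 2 ≤ (2 + C₁) ^ 2 := sq_le_sq.mpr (ha.trans (le_abs_self _))
  nlinarith

lemma exists_hasDerivAt_thetaN_zero {x : ℝ} (hκ : 0 ≤ κ)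
    (hκc : κ * (1 + (2 + C₁) ^ 2) ≤ c₁) (hV : HasDerivAt v V x) (hVc : c₁ ≤ V)
    (ha : |t - v x| ≤ 2 + C₁) :
    ∃ d, HasDerivAt (thetaN v t lam 0) d x ∧ κ / 2 * 2 ^ 0 ≤ d := by
  refine ⟨_, (hasDerivAt_arccot _).comp x ((hasDerivAt_const x t).sub hV), ?_⟩
  have hle := mul_sq_add_one_le hκ hκc hVc ha
  have hpos : 0 < 1 + (t - v x) ^ 2 := by positivity
  rw [show -(1 + (t - v x) ^ 2)⁻¹ * (0 - V) = V / (1 + (t - v x) ^ 2) by ring,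
    le_div_iff₀ hpos]
  nlinarith

lemma exists_hasDerivAt_thetaN_succ {n : ℕ} {x d : ℝ} (hκ : 0 < κ)
    (hκc : κ * (1 + (2 + C₁) ^ 2) ≤ c₁) (hlam : 8 * ((2 + C₁) * C₁) ^ 2 ≤ lam ^ 2 * κ ^ 2)
    (hθ : HasDerivAt (thetaN v t lam n) d x) (hd : κ / 2 * 2 ^ n ≤ d)
    (hπ : thetaN v t lam n x ≠ π) (hV : HasDerivAt v V (2 ^ (n + 1) * x)) (hVc : c₁ ≤ V)
    (hVC : |V| ≤ C₁) (ha : |t - v (2 ^ (n + 1) * x)| ≤ 2 + C₁) :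
    ∃ d', HasDerivAt (thetaN v t lam (n + 1)) d' x ∧ κ / 2 * 2 ^ (n + 1) ≤ d' := by
  set a := t - v (2 ^ (n + 1) * x)
  set k : ℝ := 2 ^ (n + 1)
  have hA : HasDerivAt (fun y => t - v (2 ^ (n + 1) * y)) (-(V * k)) x := by
    simpa using (hV.comp x ((hasDerivAt_id x).const_mul k)).const_sub t
  have hsin := sin_ne_zero_of_mem_Ioo_of_ne_pi (thetaN_mem_Ioo v t lam n x) hπ
  refine ⟨_, hasDerivAt_arccot_mul_cot_add_arccot (lam ^ 2) hA hθ hsin, ?_⟩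
  have hk : 0 < k := by positivity
  have hC₁ : 0 ≤ C₁ := (abs_nonneg V).trans hVC
  have harccot : -(κ / 2 * k) ≤ lam ^ 2 * (-(2 * a * -(V * k)) * cot (thetaN v t lam n x) +
      (a ^ 2 + 1) * (1 + cot (thetaN v t lam n x) ^ 2) * d) /
        (1 + (lam ^ 2 * (a ^ 2 + 1) * cot (thetaN v t lam n x)) ^ 2) := by
    refine neg_mul_le_div_of_sq_le (δ := κ / 4) (M := (2 + C₁) * C₁) (by positivity)
      (by nlinarith [sq_nonneg a]) (by positivity) hk.le (by positivity)
      (by simp only [k, pow_succ]; linarith) ?_ (by nlinarith)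
    rw [show -(2 * a * -(V * k)) = 2 * k * (a * V) by ring, abs_mul, abs_mul, abs_mul,
      abs_two, abs_of_pos hk]
    have : |a| * |V| ≤ (2 + C₁) * C₁ := mul_le_mul ha hVC (abs_nonneg V) (by linarith)
    nlinarith
  have hpotential : κ * k ≤ -(-(V * k) / (a ^ 2 + 1)) := by
    rw [neg_div, neg_neg, le_div_iff₀ (by positivity)]
    nlinarith [mul_sq_add_one_le hκ.le hκc hVc ha]
  rw [sub_eq_add_neg]
  exact le_of_eq_of_le (by ring) (add_le_add harccot hpotential)

end ThetaDerivative

/-- The points where the recursion for `θₙ` can be differentiated: `v` is smooth off `ℤ`, and as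
`θⱼ x ∈ (0, 2π)`, `cot` is smooth at `θⱼ x` unless `θⱼ x = π`. -/
def IsRegularPoint (v : ℝ → ℝ) (t lam : ℝ) : ℕ → ℝ → Prop
  | 0, x => ∀ m : ℤ, x ≠ m
  | n + 1, x => IsRegularPoint v t lam n x ∧ thetaN v t lam n x ≠ π ∧
      ∀ m : ℤ, 2 ^ (n + 1) * x ≠ m

namespace AdmissiblePotential

variable {v v' : ℝ → ℝ} {c₁ C₁ t lam κ : ℝ}

theorem exists_hasDerivAt_thetaN (hv : AdmissiblePotential v v' c₁ C₁)
    (ht : t ∈ Icc (-1 : ℝ) 2) (hκ : 0 < κ) (hκc : κ * (1 + (2 + C₁) ^ 2) ≤ c₁)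
    (hlam : 8 * ((2 + C₁) * C₁) ^ 2 ≤ lam ^ 2 * κ ^ 2) :
    ∀ {n : ℕ} {x : ℝ}, IsRegularPoint v t lam n x →
      ∃ d, HasDerivAt (thetaN v t lam n) d x ∧ κ / 2 * 2 ^ n ≤ d
  | 0, x, hx => by
    obtain ⟨V, hV, hVc, -, ha⟩ := hv.exists_hasDerivAt ht hx
    exact exists_hasDerivAt_thetaN_zero hκ.le hκc hV hVc ha
  | n + 1, x, ⟨hx, hπ, hint⟩ => by
    obtain ⟨d, hθ, hd⟩ := hv.exists_hasDerivAt_thetaN ht hκ hκc hlam hx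
    obtain ⟨V, hV, hVc, hVC, ha⟩ := hv.exists_hasDerivAt ht hint
    exact exists_hasDerivAt_thetaN_succ hκ hκc hlam hθ hd hπ hV hVc hVC ha

theorem eventually_isRegularPoint (hv : AdmissiblePotential v v' c₁ C₁)
    (ht : t ∈ Icc (-1 : ℝ) 2) (hκ : 0 < κ) (hκc : κ * (1 + (2 + C₁) ^ 2) ≤ c₁)
    (hlam : 8 * ((2 + C₁) * C₁) ^ 2 ≤ lam ^ 2 * κ ^ 2) (x : ℝ) :
    ∀ n, ∀ᶠ y in 𝓝[>] x, IsRegularPoint v t lam n y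
  | 0 => by simpa [IsRegularPoint] using eventually_nhdsGT_mul_ne_intCast one_pos x
  | n + 1 => by
    have ih := hv.eventually_isRegularPoint ht hκ hκc hlam x n
    have hπ : ∀ᶠ y in 𝓝[>] x, thetaN v t lam n y ≠ π := by
      refine eventually_nhdsGT_ne_of_hasDerivAt_pos (ih.mono fun y hy => ?_) π
      obtain ⟨d, hd, hbound⟩ := hv.exists_hasDerivAt_thetaN ht hκ hκc hlam hy
      exact ⟨d, hd, lt_of_lt_of_le (by positivity) hbound⟩
    exact ih.and (hπ.and (eventually_nhdsGT_mul_ne_intCast (by positivity) x))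

end AdmissiblePotential

theorem deriv_thetaN_lower_bound_general
    (v v' : ℝ → ℝ) (c₁ C₁ : ℝ)
    (hper : Function.Periodic v 1) (hc₁ : 0 < c₁)
    (hderiv : ∀ x ∈ Set.Ioo (0:ℝ) 1, HasDerivAt v (v' x) x)
    (hlow : ∀ x ∈ Set.Ioo (0:ℝ) 1, c₁ ≤ v' x)
    (hbd : ∀ x ∈ Set.Ioo (0:ℝ) 1, |v x| + |v' x| ≤ C₁) :
    ∃ c > (0:ℝ), ∃ lam₀ > (0:ℝ), ∀ lam ≥ lam₀, ∀ t ∈ Set.Icc (-1:ℝ) 2, ∀ n : ℕ, ∀ x : ℝ,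
      DifferentiableAt ℝ (thetaN v t lam n) x →
        deriv (thetaN v t lam n) x > c * 2 ^ n := by
  have hv : AdmissiblePotential v v' c₁ C₁ := ⟨hper, hderiv, hlow, hbd⟩
  have hC₁ : 0 < C₁ := hc₁.trans_le hv.lower_le_upper
  set κ := c₁ / (1 + (2 + C₁) ^ 2)
  have hκ : 0 < κ := by positivity
  have hκc : κ * (1 + (2 + C₁) ^ 2) ≤ c₁ := (div_mul_cancel₀ _ (by positivity)).le
  refine ⟨κ / 4, by positivity, 3 * ((2 + C₁) * C₁) / κ, by positivity,
    fun lam hlam t ht n x hx => ?_⟩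
  have hlam' : 8 * ((2 + C₁) * C₁) ^ 2 ≤ lam ^ 2 * κ ^ 2 := by
    have := (div_le_iff₀ hκ).mp hlam
    nlinarith [mul_pos (by positivity : (0 : ℝ) < 2 + C₁) hC₁]
  have hbound := le_deriv_of_eventually_nhdsGT hx
    ((hv.eventually_isRegularPoint ht hκ hκc hlam' x n).mono fun y hy =>
      hv.exists_hasDerivAt_thetaN ht hκ hκc hlam' hy)
  have : κ / 4 * 2 ^ n < κ / 2 * 2 ^ n := by gcongr; linarith
  linarith

/-- There are `c > 0` and `λ₀ > 0` depending only on `v` such that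
for all `λ ≥ λ₀`, `t ∈ [−1,2]` and `n ≥ 0`, at every point where `θₙ` is
differentiable its derivative exceeds `c · 2ⁿ`. -/
theorem deriv_thetaN_lower_bound
    (v v' : ℝ → ℝ) (c₁ C₁ : ℝ)
    (hper : Function.Periodic v 1) (hc₁ : 0 < c₁)
    (hderiv : ∀ x ∈ Set.Ioo (0:ℝ) 1, HasDerivAt v (v' x) x)
    (hv'cont : ContinuousOn v' (Set.Ioo 0 1))
    (hlow : ∀ x ∈ Set.Ioo (0:ℝ) 1, c₁ ≤ v' x)
    (hbd : ∀ x ∈ Set.Ioo (0:ℝ) 1, |v x| + |v' x| ≤ C₁)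
    (hv0 : Filter.Tendsto v (nhdsWithin 0 (Set.Ioi 0)) (nhds 0))
    (hv1 : Filter.Tendsto v (nhdsWithin 1 (Set.Iio 1)) (nhds 1)) :
    ∃ c > (0:ℝ), ∃ lam₀ > (0:ℝ), ∀ lam ≥ lam₀, ∀ t ∈ Set.Icc (-1:ℝ) 2, ∀ n : ℕ, ∀ x : ℝ,
      DifferentiableAt ℝ (thetaN v t lam n) x →
        deriv (thetaN v t lam n) x > c * 2 ^ n :=
  deriv_thetaN_lower_bound_general v v' c₁ C₁ hper hc₁ hderiv hlow hbd
end

section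
/- Let the potential be v(x) = 2cos(2πx). Then for every λ > 0 and every E ∈ ℝ, the Lyapunov exponent of the Schrödinger cocycle over the doubling map with potential λv satisfies L(E;λ) ≥ log λ. -/
/-! Herman's subharmonicity argument. With `z = e^{2πix}` one has `z • A(x) = B(z)` for the
polynomial matrix `B(z) = [[Ez - λ(z² + 1), -z], [z, 0]]`, and the doubling map becomes `z ↦ z²` on
the unit circle, so `A_n(x)` is, up to a unimodular scalar, `B(z^{2^{n-1}}) ⋯ B(z)`. The `(0,0)`
entry of the latter is a polynomial `f` in `z` with `f(0) = (-λ)^n`, and Jensen's formula gives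
`∫ log ‖A_n‖ ≥ ∫ log |f(e^{2πix})| ≥ log |f(0)| = n log λ`. -/

open Real Complex Metric
open scoped Matrix.Norms.L2Operator

theorem matNorm_eq_l2_opNorm (M : Matrix (Fin 2) (Fin 2) ℝ) : matNorm M = ‖M‖ := rfl

theorem Matrix.norm_col_le_l2_opNorm {𝕜 m n : Type*} [RCLike 𝕜] [Fintype m] [Fintype n]
    [DecidableEq n] (A : Matrix m n 𝕜) (j : n) : ‖WithLp.toLp 2 (A.col j)‖ ≤ ‖A‖ := by
  simpa [Matrix.mulVec_single_one] using A.l2_opNorm_mulVec (EuclideanSpace.single j 1)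

theorem Matrix.norm_apply_le_l2_opNorm {𝕜 m n : Type*} [RCLike 𝕜] [Fintype m] [Fintype n]
    [DecidableEq n] (A : Matrix m n 𝕜) (i : m) (j : n) : ‖A i j‖ ≤ ‖A‖ :=
  (PiLp.norm_apply_le (WithLp.toLp 2 (A.col j)) i).trans (A.norm_col_le_l2_opNorm j)

theorem Matrix.one_le_l2_opNorm_of_det_eq_one {A : Matrix (Fin 2) (Fin 2) ℝ} (h : A.det = 1) :
    1 ≤ ‖A‖ := by
  have hcol : ∀ j, A 0 j ^ 2 + A 1 j ^ 2 ≤ ‖A‖ ^ 2 := fun j ↦ by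
    have := pow_le_pow_left₀ (norm_nonneg _) (A.norm_col_le_l2_opNorm j) 2
    simpa [EuclideanSpace.norm_sq_eq, Fin.sum_univ_two] using this
  have hdet : A 0 0 * A 1 1 - A 0 1 * A 1 0 = 1 := by rwa [Matrix.det_fin_two] at h
  -- Lagrange's identity: (a² + c²)(b² + d²) = (ad - bc)² + (ab + cd)²
  have : 1 ≤ ‖A‖ ^ 4 := by
    nlinarith [sq_nonneg (A 0 0 * A 0 1 + A 1 0 * A 1 1),
      mul_le_mul (hcol 0) (hcol 1) (by positivity) (by positivity)]
  exact (one_le_pow_iff_of_nonneg (norm_nonneg A) (by norm_num)).mp this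

section Cocycle

variable {A : ℝ → Matrix (Fin 2) (Fin 2) ℝ}

theorem det_cocycle (hA : ∀ x, (A x).det = 1) (n : ℕ) (x : ℝ) : (cocycle A n x).det = 1 := by
  induction n generalizing x with
  | zero => simp [cocycle]
  | succ n ih => rw [cocycle, Matrix.det_mul, ih, hA, one_mul]

theorem continuous_cocycle (hA : Continuous A) (n : ℕ) : Continuous (cocycle A n) := by
  induction n with
  | zero => exact continuous_const
  | succ n ih => exact (ih.comp (continuous_const.mul continuous_id)).matrix_mul hA

end Cocycle

def sqCocycle (B : ℂ → Matrix (Fin 2) (Fin 2) ℂ) : ℕ → ℂ → Matrix (Fin 2) (Fin 2) ℂ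
  | 0, _ => 1
  | n + 1, z => sqCocycle B n (z ^ 2) * B z

section SqCocycle

variable {B : ℂ → Matrix (Fin 2) (Fin 2) ℂ}

theorem differentiable_sqCocycle_apply (hB : ∀ i j, Differentiable ℂ fun z ↦ B z i j) (n : ℕ)
    (i j : Fin 2) : Differentiable ℂ fun z ↦ sqCocycle B n z i j := by
  induction n generalizing i j with
  | zero => simp only [sqCocycle]; fun_prop
  | succ n ih =>
    simp only [sqCocycle, Matrix.mul_apply, Fin.sum_univ_two]
    have hsq : Differentiable ℂ fun z : ℂ ↦ z ^ 2 := by fun_prop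
    exact ((ih i 0).comp hsq).mul (hB 0 j) |>.add (((ih i 1).comp hsq).mul (hB 1 j))

theorem sqCocycle_zero_apply_zero_zero (hB : B 0 1 0 = 0) (n : ℕ) :
    sqCocycle B n 0 0 0 = B 0 0 0 ^ n := by
  induction n with
  | zero => simp [sqCocycle]
  | succ n ih =>
    simp [sqCocycle, Matrix.mul_apply, Fin.sum_univ_two, ih, hB, pow_succ]

theorem exists_smul_cocycle_eq_sqCocycle {A : ℝ → Matrix (Fin 2) (Fin 2) ℝ}
    (hAB : ∀ x, circleMap 0 1 (2 * π * x) • (A x).map ofReal = B (circleMap 0 1 (2 * π * x)))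
    (n : ℕ) (x : ℝ) :
    ∃ c : ℂ, ‖c‖ = 1 ∧
      c • (cocycle A n x).map ofReal = sqCocycle B n (circleMap 0 1 (2 * π * x)) := by
  induction n generalizing x with
  | zero => exact ⟨1, by simp, by simp [cocycle, sqCocycle]⟩
  | succ n ih =>
    obtain ⟨c, hc, hcx⟩ := ih (2 * x)
    have hsq : circleMap 0 1 (2 * π * (2 * x)) = circleMap 0 1 (2 * π * x) ^ 2 := by
      simp only [circleMap_zero, ofReal_one, one_mul, ← Complex.exp_nat_mul]
      push_cast; ring_nf
    refine ⟨c * circleMap 0 1 (2 * π * x), by simp [hc], ?_⟩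
    rw [cocycle, sqCocycle, ← hsq, ← hcx, ← hAB, smul_mul_smul_comm]
    ext i j
    simp [Matrix.mul_apply]

end SqCocycle

theorem AnalyticOnNhd.log_norm_le_circleAverage {c : ℂ} {R : ℝ} {f : ℂ → ℂ} (hR : R ≠ 0)
    (hf : AnalyticOnNhd ℂ f (closedBall c |R|)) (hc : f c ≠ 0) :
    Real.log ‖f c‖ ≤ circleAverage (Real.log ‖f ·‖) c R := by
  rw [hf.circleAverage_log_norm hR hc, le_add_iff_nonneg_left]
  refine finsum_nonneg fun u ↦ ?_
  by_cases hu : u ∈ closedBall c |R|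
  · refine mul_nonneg (by exact_mod_cast MeromorphicOn.AnalyticOnNhd.divisor_nonneg hf u) ?_
    rw [← log_abs, abs_mul, abs_inv, abs_norm]
    rcases eq_or_ne u c with rfl | huc
    · simp
    · have : 0 < ‖c - u‖ := norm_pos_iff.mpr (sub_ne_zero.mpr huc.symm)
      refine log_nonneg ?_
      rw [← div_eq_mul_inv, one_le_div this]
      simpa [dist_eq_norm, norm_sub_rev] using hu
  · simp [Function.locallyFinsuppWithin.apply_eq_zero_of_notMem _ hu]

theorem circleAverage_eq_integral_circleMap_mul (g : ℂ → ℝ) (c : ℂ) (R : ℝ) :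
    circleAverage g c R = ∫ x in (0:ℝ)..1, g (circleMap c R (2 * π * x)) := by
  rw [intervalIntegral.integral_comp_mul_left (fun θ ↦ g (circleMap c R θ)) (by positivity),
    mul_zero, mul_one, circleAverage_def]

theorem CircleIntegrable.intervalIntegrable_circleMap_mul {g : ℂ → ℝ} {c : ℂ} {R : ℝ}
    (hg : CircleIntegrable g c R) :
    IntervalIntegrable (fun x ↦ g (circleMap c R (2 * π * x))) MeasureTheory.volume 0 1 := by
  simpa [pi_ne_zero] using hg.comp_mul_left (c := 2 * π)

theorem Real.log_le_log_of_one_le_right {a b : ℝ} (ha : 0 ≤ a) (hab : a ≤ b) (hb : 1 ≤ b) :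
    Real.log a ≤ Real.log b := by
  rcases ha.eq_or_lt with rfl | ha
  · simpa using log_nonneg hb
  · exact log_le_log ha hab

theorem mul_log_norm_le_integral_log_matNorm_cocycle {A : ℝ → Matrix (Fin 2) (Fin 2) ℝ}
    {B : ℂ → Matrix (Fin 2) (Fin 2) ℂ} (hA : Continuous A) (hdet : ∀ x, (A x).det = 1)
    (hB : ∀ i j, Differentiable ℂ fun z ↦ B z i j) (hB10 : B 0 1 0 = 0) (hB00 : B 0 0 0 ≠ 0)
    (hAB : ∀ x, circleMap 0 1 (2 * π * x) • (A x).map ofReal = B (circleMap 0 1 (2 * π * x)))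
    (n : ℕ) :
    n * Real.log ‖B 0 0 0‖ ≤ ∫ x in (0:ℝ)..1, Real.log (matNorm (cocycle A n x)) := by
  set f : ℂ → ℂ := fun z ↦ sqCocycle B n z 0 0
  have hf : AnalyticOnNhd ℂ f (closedBall 0 |1|) := fun z _ ↦
    (differentiable_sqCocycle_apply hB n 0 0).analyticAt z
  have hf₀ : f 0 = B 0 0 0 ^ n := sqCocycle_zero_apply_zero_zero hB10 n
  have hfA : ∀ x, Real.log ‖f (circleMap 0 1 (2 * π * x))‖
      ≤ Real.log (matNorm (cocycle A n x)) := fun x ↦ by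
    obtain ⟨c, hc, hcA⟩ := exists_smul_cocycle_eq_sqCocycle hAB n x
    have : ‖f (circleMap 0 1 (2 * π * x))‖ = ‖cocycle A n x 0 0‖ := by
      simp [f, ← hcA, hc]
    rw [this, matNorm_eq_l2_opNorm]
    exact Real.log_le_log_of_one_le_right (norm_nonneg _)
      ((cocycle A n x).norm_apply_le_l2_opNorm 0 0)
      (Matrix.one_le_l2_opNorm_of_det_eq_one (det_cocycle hdet n x))
  have hlog : Continuous fun x ↦ Real.log (matNorm (cocycle A n x)) :=
    (continuous_norm.comp (continuous_cocycle hA n)).log fun x ↦ by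
      have := Matrix.one_le_l2_opNorm_of_det_eq_one (det_cocycle hdet n x)
      simp only [Function.comp_apply]; positivity
  have hfint : CircleIntegrable (Real.log ‖f ·‖) 0 1 :=
    (hf.meromorphicOn.mono_set sphere_subset_closedBall).circleIntegrable_log_norm
  calc n * Real.log ‖B 0 0 0‖ = Real.log ‖f 0‖ := by rw [hf₀, norm_pow, Real.log_pow]
    _ ≤ circleAverage (Real.log ‖f ·‖) 0 1 :=
      hf.log_norm_le_circleAverage one_ne_zero (by rw [hf₀]; exact pow_ne_zero n hB00)
    _ = ∫ x in (0:ℝ)..1, Real.log ‖f (circleMap 0 1 (2 * π * x))‖ :=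
      circleAverage_eq_integral_circleMap_mul _ 0 1
    _ ≤ ∫ x in (0:ℝ)..1, Real.log (matNorm (cocycle A n x)) :=
      intervalIntegral.integral_mono_on zero_le_one hfint.intervalIntegrable_circleMap_mul
        (hlog.intervalIntegrable 0 1) fun x _ ↦ hfA x

section Herman

variable (E lam : ℝ)

noncomputable def hermanExtension (z : ℂ) : Matrix (Fin 2) (Fin 2) ℂ :=
  !![E * z - lam * (z ^ 2 + 1), -z; z, 0]

theorem circleMap_smul_schrodinger_eq_hermanExtension (x : ℝ) :
    circleMap 0 1 (2 * π * x) •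
        (!![E - lam * (2 * Real.cos (2 * π * x)), -1; 1, 0] : Matrix (Fin 2) (Fin 2) ℝ).map ofReal =
      hermanExtension E lam (circleMap 0 1 (2 * π * x)) := by
  set z := circleMap 0 1 (2 * π * x)
  have hcos : 2 * Complex.cos (2 * π * x) = z + z⁻¹ := by
    simp only [z, circleMap_zero, Complex.cos]
    push_cast; ring_nf
    rw [Complex.exp_neg]
  have hz : z ≠ 0 := circleMap_ne_center one_ne_zero
  have h00 : z * (E - lam * (z + z⁻¹)) = E * z - lam * (z ^ 2 + 1) := by field_simp
  ext i j
  fin_cases i <;> fin_cases j <;> simp [hermanExtension, hcos, h00]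

theorem mul_log_le_integral_log_matNorm_schrodinger_cocycle (hlam : 0 < lam) (n : ℕ) :
    n * Real.log lam ≤ ∫ x in (0:ℝ)..1, Real.log (matNorm
      (cocycle (fun x ↦ !![E - lam * (2 * Real.cos (2 * π * x)), -1; 1, 0]) n x)) := by
  have h := mul_log_norm_le_integral_log_matNorm_cocycle (B := hermanExtension E lam)
    (by fun_prop) (fun x ↦ by simp [Matrix.det_fin_two])
    (fun i j ↦ by fin_cases i <;> fin_cases j <;> simp [hermanExtension] <;> fun_prop)
    (by simp [hermanExtension]) (by simp [hermanExtension, hlam.ne'])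
    (circleMap_smul_schrodinger_eq_hermanExtension E lam) n
  simpa [hermanExtension, abs_of_pos hlam] using h

end Herman

/-- (Herman's bound for the doubling map.) For the potential
`v(x) = 2cos(2πx)`, every `λ > 0` and every `E`, the Lyapunov exponent of the
Schrödinger cocycle over the doubling map satisfies `L(E;λ) ≥ log λ`. -/
theorem herman_lower_bound :
    ∀ lam > (0:ℝ), ∀ E : ℝ,
      lyap (fun x => !![E - lam * (2 * Real.cos (2 * Real.pi * x)), -1; 1, 0])
        ≥ Real.log lam := by
  intro lam hlam E
  refine le_ciInf fun n ↦ ?_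
  have h := mul_log_le_integral_log_matNorm_schrodinger_cocycle E lam hlam (n + 1)
  rw [one_div, ← div_eq_inv_mul, le_div_iff₀ (by positivity), mul_comm]
  exact_mod_cast h
end

section
/- For any real number r and any λ > 0, the operator norm of the matrix M = [[λr, −λ^{−1}], [λ, 0]] ∈ SL(2,ℝ) equals λ√(a/2), where a = r² + 1 + λ^{−4} + √((r² + 1 + λ^{−4})² − 4λ^{−4}). -/
/-!
For `M = !![a, b; c, d]`, the matrix `Mᵀ M` has trace `F = a² + b² + c² + d²` and determinant
`(ad - bc)²`, so its largest eigenvalue is the larger root `μ` of `t² - F t + (ad - bc)²`.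
The quadratic form `v ↦ μ ‖v‖² - ‖M v‖²` then has nonnegative trace and zero determinant: it is
nonnegative and vanishes on a nonzero vector, whence `‖M‖ = √μ`. For the matrix of the theorem
`F = λ² (r² + 1 + λ⁻⁴)` and `ad - bc = 1`.
-/

theorem ContinuousLinearMap.opNorm_eq_sqrt_of_sq_le_of_attained {E F : Type*}
    [SeminormedAddCommGroup E] [NormedSpace ℝ E] [SeminormedAddCommGroup F] [NormedSpace ℝ F]
    (T : E →L[ℝ] F) {μ : ℝ} (hle : ∀ x, ‖T x‖ ^ 2 ≤ μ * ‖x‖ ^ 2) {x₀ : E} (hx₀ : 0 < ‖x₀‖)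
    (heq : ‖T x₀‖ ^ 2 = μ * ‖x₀‖ ^ 2) : ‖T‖ = √μ := by
  have hμ : 0 ≤ μ := by
    have := pow_pos hx₀ 2
    nlinarith [sq_nonneg ‖T x₀‖]
  have hnorm : ∀ x, ‖T x‖ ≤ √μ * ‖x‖ := fun x => by
    rw [← Real.sqrt_sq (norm_nonneg (T x)), ← Real.sqrt_sq (norm_nonneg x), ← Real.sqrt_mul hμ]
    exact Real.sqrt_le_sqrt (hle x)
  refine le_antisymm (T.opNorm_le_bound (Real.sqrt_nonneg μ) hnorm) ?_
  have hattained : ‖T x₀‖ = √μ * ‖x₀‖ := by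
    rw [← Real.sqrt_sq (norm_nonneg (T x₀)), heq, Real.sqrt_mul hμ, Real.sqrt_sq (norm_nonneg x₀)]
  exact le_of_mul_le_mul_right (hattained ▸ T.le_opNorm x₀) hx₀

theorem quadratic_form_nonneg_of_mul_eq_sq {P Q R : ℝ} (htr : 0 ≤ P + R) (hdet : P * R = Q ^ 2)
    (x y : ℝ) :
    0 ≤ P * x ^ 2 + 2 * Q * x * y + R * y ^ 2 := by
  have hP : 0 ≤ P := by nlinarith [sq_nonneg Q]
  rcases hP.eq_or_lt with hP0 | hPpos
  · have hQ : Q = 0 := by nlinarith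
    subst hQ; rw [← hP0]; nlinarith [sq_nonneg y]
  · refine nonneg_of_mul_nonneg_right ?_ hPpos
    nlinarith [sq_nonneg (P * x + Q * y)]

theorem exists_ne_zero_quadratic_form_eq_zero {P Q R : ℝ} (hdet : P * R = Q ^ 2) :
    ∃ x y : ℝ, (x, y) ≠ 0 ∧ P * x ^ 2 + 2 * Q * x * y + R * y ^ 2 = 0 := by
  by_cases h : R = 0 ∧ Q = 0
  · exact ⟨0, 1, by simp, by simp [h.1]⟩
  · refine ⟨R, -Q, fun h' => h ?_, by linear_combination R * hdet⟩
    simp only [Prod.mk_eq_zero, neg_eq_zero] at h'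
    exact h'

theorem EuclideanSpace.norm_sq_fin_two (v : EuclideanSpace ℝ (Fin 2)) :
    ‖v‖ ^ 2 = v 0 ^ 2 + v 1 ^ 2 := by
  simp [EuclideanSpace.norm_sq_eq, Fin.sum_univ_two]

theorem toEuclideanLin_fin_two_apply (a b c d : ℝ) (v : EuclideanSpace ℝ (Fin 2)) :
    Matrix.toEuclideanLin !![a, b; c, d] v = !₂[a * v 0 + b * v 1, c * v 0 + d * v 1] := by
  ext i; fin_cases i <;> simp [Matrix.toLpLin_apply, dotProduct, Fin.sum_univ_two]

theorem matNorm_fin_two_of (a b c d : ℝ) :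
    matNorm !![a, b; c, d] = √((a ^ 2 + b ^ 2 + c ^ 2 + d ^ 2 +
      √((a ^ 2 + b ^ 2 + c ^ 2 + d ^ 2) ^ 2 - 4 * (a * d - b * c) ^ 2)) / 2) := by
  set F := a ^ 2 + b ^ 2 + c ^ 2 + d ^ 2
  set D := a * d - b * c
  have hdisc : 0 ≤ F ^ 2 - 4 * D ^ 2 := by
    have : F ^ 2 - 4 * D ^ 2 = ((a - d) ^ 2 + (b + c) ^ 2) * ((a + d) ^ 2 + (b - c) ^ 2) := by ring
    rw [this]; positivity
  set s := √(F ^ 2 - 4 * D ^ 2)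
  have hs : s ^ 2 = F ^ 2 - 4 * D ^ 2 := Real.sq_sqrt hdisc
  set μ := (F + s) / 2 with hμ
  have htr : 0 ≤ (μ - (a ^ 2 + c ^ 2)) + (μ - (b ^ 2 + d ^ 2)) := by
    linarith [Real.sqrt_nonneg (F ^ 2 - 4 * D ^ 2)]
  have hdet : (μ - (a ^ 2 + c ^ 2)) * (μ - (b ^ 2 + d ^ 2)) = (-(a * b + c * d)) ^ 2 := by
    linear_combination (1 / 4 : ℝ) * hs
  have hgap : ∀ v : EuclideanSpace ℝ (Fin 2),
      μ * ‖v‖ ^ 2 - ‖Matrix.toEuclideanLin !![a, b; c, d] v‖ ^ 2 =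
        (μ - (a ^ 2 + c ^ 2)) * v 0 ^ 2 + 2 * (-(a * b + c * d)) * v 0 * v 1
        + (μ - (b ^ 2 + d ^ 2)) * v 1 ^ 2 := fun v => by
    rw [toEuclideanLin_fin_two_apply, EuclideanSpace.norm_sq_fin_two,
      EuclideanSpace.norm_sq_fin_two]
    simp only [Fin.isValue, Matrix.cons_val_zero, Matrix.cons_val_one, Matrix.cons_val_fin_one,
      neg_add_rev]
    ring
  obtain ⟨x, y, hxy, hzero⟩ := exists_ne_zero_quadratic_form_eq_zero hdet
  refine ContinuousLinearMap.opNorm_eq_sqrt_of_sq_le_of_attained _ (x₀ := !₂[x, y])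
    (fun v => ?_) ?_ ?_
  · show ‖Matrix.toEuclideanLin _ v‖ ^ 2 ≤ _
    linarith [hgap v, quadratic_form_nonneg_of_mul_eq_sq htr hdet (v 0) (v 1)]
  · refine norm_pos_iff.2 fun h => hxy ?_
    have h0 := congrArg (· 0) h
    have h1 := congrArg (· 1) h
    simp_all
  · show ‖Matrix.toEuclideanLin _ _‖ ^ 2 = _
    have h := hgap !₂[x, y]
    simp only [Matrix.cons_val_zero, Matrix.cons_val_one] at h
    linarith

/-- For any `r` and `λ > 0`, the Euclidean operator norm of
`[[λr, −λ⁻¹], [λ, 0]]` equals `λ√(a/2)` with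
`a = r² + 1 + λ⁻⁴ + √((r² + 1 + λ⁻⁴)² − 4λ⁻⁴)`. -/
theorem opNorm_schrodinger_conjugated (r lam : ℝ) (hlam : 0 < lam) :
    matNorm !![lam * r, -lam⁻¹; lam, 0]
      = lam * Real.sqrt
          ((r ^ 2 + 1 + 1 / lam ^ 4 +
            Real.sqrt ((r ^ 2 + 1 + 1 / lam ^ 4) ^ 2 - 4 / lam ^ 4)) / 2) := by
  set p := r ^ 2 + 1 + 1 / lam ^ 4 with hp
  have hfrob : (lam * r) ^ 2 + (-lam⁻¹) ^ 2 + lam ^ 2 + 0 ^ 2 = lam ^ 2 * p := by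
    rw [hp]; field_simp; ring
  have hdisc : ((lam * r) ^ 2 + (-lam⁻¹) ^ 2 + lam ^ 2 + 0 ^ 2) ^ 2
      - 4 * (lam * r * 0 - -lam⁻¹ * lam) ^ 2 = (lam ^ 2) ^ 2 * (p ^ 2 - 4 / lam ^ 4) := by
    rw [hp]; field_simp; ring
  rw [matNorm_fin_two_of, hdisc, Real.sqrt_mul (by positivity), Real.sqrt_sq (by positivity),
    hfrob, ← mul_add, mul_div_assoc, Real.sqrt_mul (by positivity), Real.sqrt_sq hlam.le]
end

section
/- There exist absolute constants c' > 0 and λ₀ ≥ 1 such that the following holds: for any r ∈ [−2, 2] with g = r² + 1, any u ∈ ℝ with g|u| ≥ λ^{−3/2}, and any λ ≥ λ₀, setting h = λ²gu one has 1/g − 2λ²ur/(1 + h²) ≥ c'. -/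
/-- There are absolute constants `c' > 0` and `λ₀ ≥ 1` such that for
any `r ∈ [−2,2]`, `g = r² + 1`, any `u` with `g|u| ≥ λ^{−3/2}` and any `λ ≥ λ₀`,
`1/g − 2λ²ur/(1 + (λ²gu)²) ≥ c'`. -/
theorem f_lower_bound :
    ∃ c' > (0:ℝ), ∃ lam₀ : ℝ, 1 ≤ lam₀ ∧
      ∀ r ∈ Set.Icc (-2:ℝ) 2, ∀ u lam : ℝ, lam₀ ≤ lam →
        (r ^ 2 + 1) * |u| ≥ lam ^ (-(3:ℝ) / 2) →
          1 / (r ^ 2 + 1) - 2 * lam ^ 2 * u * r / (1 + (lam ^ 2 * (r ^ 2 + 1) * u) ^ 2)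
            ≥ c' := by
  refine ⟨1/10, by norm_num, 10000, by norm_num, ?_⟩
  rintro r ⟨hr1, hr2⟩ u lam hlam hgu
  have hlam0 : (0:ℝ) < lam := by linarith
  have hg1 : (1:ℝ) ≤ r ^ 2 + 1 := by nlinarith
  have hg5 : r ^ 2 + 1 ≤ 5 := by nlinarith
  -- lam^(1/2) ≥ 100
  have hsq : (100:ℝ) ≤ lam ^ ((1:ℝ)/2) := by
    have : (10000:ℝ) ^ ((1:ℝ)/2) ≤ lam ^ ((1:ℝ)/2) :=
      Real.rpow_le_rpow (by norm_num) hlam (by norm_num)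
    have h2 : (10000:ℝ) ^ ((1:ℝ)/2) = 100 := by
      rw [show (10000:ℝ) = 100 ^ (2:ℕ) by norm_num, ← Real.rpow_natCast 100 2,
        ← Real.rpow_mul (by norm_num)]
      norm_num
    linarith [h2 ▸ this]
  have key : (100:ℝ) ≤ lam ^ 2 * ((r ^ 2 + 1) * |u|) := by
    have h1 : lam ^ 2 * lam ^ (-(3:ℝ)/2) = lam ^ ((1:ℝ)/2) := by
      rw [← Real.rpow_natCast lam 2, ← Real.rpow_add hlam0]
      norm_num
    have h2 : lam ^ 2 * lam ^ (-(3:ℝ)/2) ≤ lam ^ 2 * ((r ^ 2 + 1) * |u|) := by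
      apply mul_le_mul_of_nonneg_left hgu (by positivity)
    linarith [h1 ▸ h2]
  have hu : u ≠ 0 := by
    rintro rfl
    simp at key
    nlinarith
  have hAu : (0:ℝ) < lam ^ 2 * |u| := by positivity
  have hD : (0:ℝ) < 1 + (lam ^ 2 * (r ^ 2 + 1) * u) ^ 2 := by positivity
  have hterm : 2 * lam ^ 2 * u * r / (1 + (lam ^ 2 * (r ^ 2 + 1) * u) ^ 2) ≤ 1/25 := by
    rw [div_le_iff₀ hD]
    have habsr : |r| ≤ 2 := abs_le.mpr ⟨hr1, hr2⟩
    have h1 : 2 * lam ^ 2 * u * r ≤ 4 * (lam ^ 2 * |u|) := by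
      have : u * r ≤ |u| * |r| := by
        calc u * r ≤ |u * r| := le_abs_self _
        _ = |u| * |r| := abs_mul u r
      nlinarith [sq_nonneg lam, abs_nonneg u]
    have h2 : 4 * (lam ^ 2 * |u|) ≤ 1/25 * (lam ^ 2 * (r ^ 2 + 1) * u) ^ 2 := by
      have hsq2 : (lam ^ 2 * (r ^ 2 + 1) * u) ^ 2
          = (lam ^ 2 * |u|) * (lam ^ 2 * ((r ^ 2 + 1) ^ 2 * |u|)) := by
        rw [mul_pow, mul_pow, ← sq_abs u]; ring
      have hg2 : (100:ℝ) ≤ lam ^ 2 * ((r ^ 2 + 1) ^ 2 * |u|) := by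
        nlinarith [abs_nonneg u, sq_nonneg lam]
      rw [hsq2]
      nlinarith
    nlinarith
  have hginv : (1:ℝ)/5 ≤ 1 / (r ^ 2 + 1) := by
    rw [div_le_div_iff₀ (by norm_num) (by positivity)]
    linarith
  linarith
end
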